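/- arXiv:1811.05932 — 3 statements merged into one kernel-verified Lean document; each statement's English description precedes it below -/
import Mathlib

section
/- Let f, g : Fin n → ℝ and suppose ∑_{i} f i = n * c and ∑_{i} g i = n * d, where c, d : ℝ, and let α = 1 - √(1 - 1/n) with n ≥ 1. Then ∑_{i} (f i - α*c)*(g i - α*d) + c*d = ∑_{i} (f i)*(g i). -/
/-!
Expanding the product, the shift contributes `c * d * (n * α ^ 2 - 2 * n * α)` to the sum, and
`α = 1 - √(1 - 1 / n)` is chosen as a root of `n * α * (2 - α) = 1`, so this is exactly `-c * d`.
-/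

theorem Finset.sum_sub_mul_sub {ι R : Type*} [CommRing R] (s : Finset ι) (f g : ι → R) (a b : R) :
    ∑ i ∈ s, (f i - a) * (g i - b)
      = ∑ i ∈ s, f i * g i - a * ∑ i ∈ s, g i - b * ∑ i ∈ s, f i + s.card * a * b := by
  simp only [sub_mul, mul_sub, Finset.sum_sub_distrib, Finset.sum_const, nsmul_eq_mul,
    ← Finset.mul_sum, ← Finset.sum_mul]
  ring

theorem Real.one_sub_sqrt_one_sub_mul_one_add_sqrt_one_sub {t : ℝ} (ht : t ≤ 1) :
    (1 - √(1 - t)) * (1 + √(1 - t)) = t := by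
  linear_combination -Real.sq_sqrt (sub_nonneg.2 ht)

theorem stmt2 (n : ℕ) (hn : 1 ≤ n) (f g : Fin n → ℝ) (c d : ℝ)
    (hf : ∑ i, f i = n * c) (hg : ∑ i, g i = n * d) :
    let α : ℝ := 1 - Real.sqrt (1 - 1 / n)
    ∑ i, (f i - α * c) * (g i - α * d) + c * d = ∑ i, f i * g i := by
  intro α
  have hn₀ : (n : ℝ) ≠ 0 := by positivity
  have hα : n * (α * (2 - α)) = 1 := by
    have hroot := Real.one_sub_sqrt_one_sub_mul_one_add_sqrt_one_sub (t := 1 / n)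
      (div_le_one_of_le₀ (by exact_mod_cast hn) (Nat.cast_nonneg n))
    rw [show 2 - α = 1 + √(1 - 1 / n) by ring, hroot]
    field_simp
  rw [Finset.sum_sub_mul_sub, hf, hg, Finset.card_univ, Fintype.card_fin]
  linear_combination (-(c * d)) * hα
end

section
/- Let F : Fin n → Fin k → ℝ be such that the columns are orthonormal, i.e., ∑_i F i j * F i l = δ_{jl} for all j, l. Define the mean vector m j = (∑_i F i j)/n, let α = 1 - √(1 - 1/n) with n ≥ 1, and define F' : Fin (n+1) → Fin k → ℝ by F' i j = F i j - α * m j for i < n, and F' n j = m j. Then the columns of F' are orthonormal: ∑_i F' i j * F' i l = δ_{jl} for all j, l. -/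
/-!
Write `G` for the Gram matrix of the columns and `m` for the column means. Shifting every row by
`-α m` changes the Gram matrix by `n (α² - 2α) m mᵀ`, and the appended row `m` adds `m mᵀ`.
The choice `α = 1 - √(1 - 1/n)` is exactly a root of `n (α² - 2α) + 1 = 0`, so the two
corrections cancel.
-/

open Finset

theorem sq_sub_two_mul_one_sub_sqrt_one_sub {c : ℝ} (hc : c ≤ 1) :
    (1 - √(1 - c)) ^ 2 - 2 * (1 - √(1 - c)) = -c := by
  have hsq : √(1 - c) ^ 2 = 1 - c := Real.sq_sqrt (by linarith)
  linear_combination hsq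

theorem sum_sub_mul_sub_of_sum_eq_card_mul {ι : Type*} [Fintype ι] (u v : ι → ℝ) (p q a : ℝ)
    (hu : ∑ i, u i = Fintype.card ι * p) (hv : ∑ i, v i = Fintype.card ι * q) :
    ∑ i, (u i - a * p) * (v i - a * q) =
      ∑ i, u i * v i + Fintype.card ι * (a ^ 2 - 2 * a) * p * q := by
  have hexpand : ∀ i, (u i - a * p) * (v i - a * q) =
      u i * v i - (a * q) * u i - (a * p) * v i + a ^ 2 * p * q := fun i => by ring
  simp only [hexpand, sum_add_distrib, sum_sub_distrib, ← mul_sum, hu, hv, sum_const, card_univ,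
    nsmul_eq_mul]
  ring

theorem stmt3 (n k : ℕ) (hn : 1 ≤ n) (F : Fin n → Fin k → ℝ)
    (horth : ∀ j l, ∑ i, F i j * F i l = if j = l then (1 : ℝ) else 0)
    (m : Fin k → ℝ) (hm : ∀ j, m j = (∑ i, F i j) / n)
    (α : ℝ) (hα : α = 1 - Real.sqrt (1 - 1 / n))
    (F' : Fin (n + 1) → Fin k → ℝ)
    (hF'cast : ∀ (i : Fin n) (j : Fin k), F' i.castSucc j = F i j - α * m j)
    (hF'last : ∀ j, F' (Fin.last n) j = m j) :
    ∀ j l, ∑ i, F' i j * F' i l = if j = l then (1 : ℝ) else 0 := by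
  intro j l
  have hn0 : (n : ℝ) ≠ 0 := by positivity
  have hsum : ∀ j, ∑ i, F i j = Fintype.card (Fin n) * m j := fun j => by
    rw [hm, Fintype.card_fin]
    field_simp
  have hα_root : α ^ 2 - 2 * α = -(1 / n) := by
    rw [hα]
    exact sq_sub_two_mul_one_sub_sqrt_one_sub
      (div_le_one_of_le₀ (by exact_mod_cast hn) (Nat.cast_nonneg n))
  rw [Fin.sum_univ_castSucc]
  simp only [hF'cast, hF'last]
  rw [sum_sub_mul_sub_of_sum_eq_card_mul _ _ _ _ _ (hsum j) (hsum l), horth, hα_root,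
    Fintype.card_fin]
  field_simp
  ring
end

section
/- Let F : Fin n → Fin k → ℝ have orthonormal columns, let S ⊆ Fin n be a nonempty subset with |S| = s, define m j = (∑_{i ∈ S} F i j)/s, α = 1 - √(1 - 1/s), and define F' : Fin (n+1) → Fin k → ℝ by F' i j = F i j - α * m j for i ∈ S, F' i j = F i j for i ∈ Fin n \ S, and F' n j = m j. Then F' has orthonormal columns. -/
/-!
Since the rows of `F` over `S` sum to `s • m`, shifting each of them by `-α • m` changes the
Gram matrix `Fᵀ F` by `s (α² - 2α) m mᵀ`, and the appended row `m` adds `m mᵀ`. The choice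
`α = 1 - √(1 - 1/s)` makes `(1 - α)² = 1 - 1/s`, i.e. `s (α² - 2α) = -1`, so the two
corrections cancel and `F'ᵀ F' = Fᵀ F = I`.
-/

open Finset

theorem Finset.sum_sub_mul_mul_sub_mul {ι : Type*} {S : Finset ι} {x y : ι → ℝ} {mx my : ℝ}
    (hx : ∑ i ∈ S, x i = #S * mx) (hy : ∑ i ∈ S, y i = #S * my) (a : ℝ) :
    ∑ i ∈ S, (x i - a * mx) * (y i - a * my)
      = ∑ i ∈ S, x i * y i + #S * (a ^ 2 - 2 * a) * mx * my := by
  simp only [sub_mul, mul_sub, sum_sub_distrib, ← mul_sum, ← sum_mul, sum_const, nsmul_eq_mul]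
  rw [hx, hy]
  ring

theorem mul_sq_sub_two_mul_one_sub_sqrt_one_sub_inv {s : ℝ} (hs : 1 ≤ s) :
    s * ((1 - √(1 - 1 / s)) ^ 2 - 2 * (1 - √(1 - 1 / s))) = -1 := by
  have hsq : √(1 - 1 / s) ^ 2 = 1 - 1 / s :=
    Real.sq_sqrt (sub_nonneg.mpr ((div_le_one (by linarith)).mpr hs))
  rw [show ∀ r : ℝ, (1 - r) ^ 2 - 2 * (1 - r) = r ^ 2 - 1 from fun r ↦ by ring, hsq]
  field_simp
  ring

theorem sum_mul_of_shift_rows_append_mean {n k : ℕ} {F : Fin n → Fin k → ℝ}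
    {S : Finset (Fin n)} {m : Fin k → ℝ} (hm : ∀ j, ∑ i ∈ S, F i j = #S * m j)
    {α : ℝ} {F' : Fin (n + 1) → Fin k → ℝ}
    (hF'in : ∀ i ∈ S, ∀ j, F' i.castSucc j = F i j - α * m j)
    (hF'out : ∀ i ∉ S, ∀ j, F' i.castSucc j = F i j)
    (hF'last : ∀ j, F' (Fin.last n) j = m j) (j l : Fin k) :
    ∑ i, F' i j * F' i l
      = ∑ i, F i j * F i l + (#S * (α ^ 2 - 2 * α) + 1) * m j * m l := by
  have hin : ∑ i ∈ S, F' i.castSucc j * F' i.castSucc l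
      = ∑ i ∈ S, (F i j - α * m j) * (F i l - α * m l) :=
    sum_congr rfl fun i hi ↦ by rw [hF'in i hi j, hF'in i hi l]
  have hout : ∑ i ∈ Sᶜ, F' i.castSucc j * F' i.castSucc l = ∑ i ∈ Sᶜ, F i j * F i l :=
    sum_congr rfl fun i hi ↦ by rw [hF'out i (mem_compl.mp hi) j, hF'out i (mem_compl.mp hi) l]
  rw [Fin.sum_univ_castSucc, hF'last, hF'last,
    ← sum_add_sum_compl S fun i ↦ F' i.castSucc j * F' i.castSucc l,
    ← sum_add_sum_compl S fun i ↦ F i j * F i l, hin, hout,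
    sum_sub_mul_mul_sub_mul (hm j) (hm l)]
  ring

theorem stmt4 (n k : ℕ) (F : Fin n → Fin k → ℝ)
    (horth : ∀ j l, ∑ i, F i j * F i l = if j = l then (1 : ℝ) else 0)
    (S : Finset (Fin n)) (hS : S.Nonempty) (s : ℕ) (hs : S.card = s)
    (m : Fin k → ℝ) (hm : ∀ j, m j = (∑ i ∈ S, F i j) / s)
    (α : ℝ) (hα : α = 1 - Real.sqrt (1 - 1 / s))
    (F' : Fin (n + 1) → Fin k → ℝ)
    (hF'in : ∀ i ∈ S, ∀ j, F' i.castSucc j = F i j - α * m j)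
    (hF'out : ∀ i ∉ S, ∀ j, F' (Fin.castSucc i) j = F i j)
    (hF'last : ∀ j, F' (Fin.last n) j = m j) :
    ∀ j l, ∑ i, F' i j * F' i l = if j = l then (1 : ℝ) else 0 := by
  intro j l
  have one_le_s : (1 : ℝ) ≤ s := by exact_mod_cast hs ▸ hS.card_pos
  have hsum : ∀ j, ∑ i ∈ S, F i j = #S * m j := fun j ↦ by
    rw [hm j, hs]; field_simp
  rw [sum_mul_of_shift_rows_append_mean hsum hF'in hF'out hF'last, horth, hs, hα,
    mul_sq_sub_two_mul_one_sub_sqrt_one_sub_inv one_le_s]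
  ring
end
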